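/- For every initial list and every request sequence σ, under the full cost model, min(MTFO(σ), MTFE(σ)) ≤ 2·OPT(σ); that is, on every input at least one of MTFO and MTFE has cost at most twice the optimal offline cost. -/

import Mathlib

namespace ListUpdate

variable {α : Type} [DecidableEq α]

/-- Swap the adjacent items at (0-based) positions `i` and `i+1`. -/
def adjSwap (L : List α) (i : ℕ) : List α :=
  L.take i ++ (match L.drop i with
    | a :: b :: t => b :: a :: t
    | t => t)

/-- An offline action for one request: a sequence of paid exchanges performed
before the access (each given by the position of the swapped pair), and the
target position for the free exchange performed after the access. -/
structure Action (α : Type) where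
  paid : List ℕ
  target : ℕ

def doPaid (L : List α) (ps : List ℕ) : List α := ps.foldl adjSwap L

/-- Move item `r` (for free) to position `min j (current position)`,
i.e. to any position not farther from the front. -/
def freeMove (L : List α) (r : α) (j : ℕ) : List α :=
  (L.erase r).insertIdx (min j (L.idxOf r)) r

/-- Cost of one offline step: one unit per paid exchange plus the access cost;
`c = 1` gives the full cost model, `c = 0` the partial cost model. -/
def stepCost (c : ℕ) (L : List α) (r : α) (a : Action α) : ℕ :=
  a.paid.length + ((doPaid L a.paid).idxOf r + c)

def stepList (L : List α) (r : α) (a : Action α) : List α :=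
  freeMove (doPaid L a.paid) r a.target

/-- Total cost of serving the request sequence with the given actions. -/
def serveCost (c : ℕ) : List α → List α → List (Action α) → ℕ
  | _, [], _ => 0
  | _, _ :: _, [] => 0
  | L, r :: σ, a :: as => stepCost c L r a + serveCost c (stepList L r a) σ as

/-- The list configuration after serving the requests with the given actions. -/
def serveList : List α → List α → List (Action α) → List α
  | L, [], _ => L
  | L, _ :: _, [] => L
  | L, r :: σ, a :: as => serveList (stepList L r a) σ as

/-- `optCost c L σ` : the optimal offline cost of serving `σ` starting from list `L`. -/
noncomputable def optCost (c : ℕ) (L : List α) (σ : List α) : ℕ :=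
  sInf { n | ∃ as : List (Action α), as.length = σ.length ∧ serveCost c L σ as = n }

/-- Cost of an MTF2 (move-to-front-every-other-access) algorithm: it keeps one bit
per item; on each request the requested item's bit is flipped and the item is moved
to the front exactly when the bit becomes `false` (i.e. 0). -/
def mtf2Cost (c : ℕ) : (α → Bool) → List α → List α → ℕ
  | _, _, [] => 0
  | bits, L, r :: σ =>
    (L.idxOf r + c) +
      mtf2Cost c (Function.update bits r (!bits r))
        (if !bits r then L else r :: L.erase r) σ

/-- Final list of an MTF2 algorithm. -/
def mtf2List : (α → Bool) → List α → List α → List α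
  | _, L, [] => L
  | bits, L, r :: σ =>
      mtf2List (Function.update bits r (!bits r))
        (if !bits r then L else r :: L.erase r) σ

/-- MTFO moves the requested item to the front on every odd request to it:
this is MTF2 with all bits initially 1. -/
def mtfoCost (c : ℕ) (L σ : List α) : ℕ := mtf2Cost c (fun _ => true) L σ

/-- MTFE moves the requested item to the front on every even request to it:
this is MTF2 with all bits initially 0. -/
def mtfeCost (c : ℕ) (L σ : List α) : ℕ := mtf2Cost c (fun _ => false) L σ

/-- One step of TS (Timestamp). `h` is the list of previous requests, most recent
first. The requested item `x` is inserted in front of the first item of the list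
that precedes `x` and was requested at most once since the last request to `x`;
if there is no such item, or this is the first request to `x`, nothing moves. -/
def tsStep (h : List α) (L : List α) (x : α) : List α :=
  if x ∈ h then
    let cnt : α → ℕ := fun z => (h.takeWhile (fun w => decide (w ≠ x))).count z
    let pre := L.takeWhile (fun w => decide (w ≠ x))
    let keep := pre.takeWhile (fun z => decide (2 ≤ cnt z))
    keep ++ x :: (pre.drop keep.length ++ (L.dropWhile (fun w => decide (w ≠ x))).tail)
  else L

/-- Cost of TS; `h` is the history of previous requests, most recent first
(initially `[]`). -/
def tsCost (c : ℕ) : List α → List α → List α → ℕ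
  | _, _, [] => 0
  | h, L, r :: σ => (L.idxOf r + c) + tsCost c (r :: h) (tsStep h L r) σ

/-- An online algorithm with advice: its action may depend on the advice tape and
on the sequence of requests seen so far (ending with the current request). -/
def OnlineAdviceAlg (α : Type) := (ℕ → Bool) → List α → Action α

/-- Total cost of running the online algorithm `A` with advice tape `φ`:
`past` is the reversed-free list of requests served so far (oldest first). -/
def runAdvCost (c : ℕ) (A : OnlineAdviceAlg α) (φ : ℕ → Bool) :
    List α → List α → List α → ℕ
  | _, _, [] => 0
  | past, L, r :: σ =>
      stepCost c L r (A φ (past ++ [r])) +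
        runAdvCost c A φ (past ++ [r]) (stepList L r (A φ (past ++ [r]))) σ

/-- `A`, run on `σ` with tape `φ`, reads at most the first `k` bits of advice:
its behaviour on every step of `σ` is unchanged if the tape is modified
beyond position `k`. -/
def UsesAdvice (A : OnlineAdviceAlg α) (φ : ℕ → Bool) (σ : List α) (k : ℕ) : Prop :=
  ∀ ψ : ℕ → Bool, (∀ i < k, ψ i = φ i) →
    ∀ t, 0 < t → t ≤ σ.length → A ψ (σ.take t) = A φ (σ.take t)

end ListUpdate

/-!
Run MTFO, MTFE and an arbitrary offline schedule side by side. The potential `Φ` sums, over the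
ordered pairs `(x, y)` of items, a weight that depends only on whether `y` precedes `x` in each of
the three lists and on MTFO's bits of `x` and `y` (MTFE's bit of an item is always the complement
of MTFO's). Each request satisfies `2·MTFO + 2·MTFE + ΔΦ ≤ 8·OPT`: a paid exchange reorders a
single pair and so raises `Φ` by at most `8`, and an access decomposes over the pairs containing
the requested item, where the inequality is a finite check. Since `Φ` starts at `0`, summing gives
`MTFO + MTFE ≤ 4·OPT`, so the cheaper of the two costs at most `2·OPT`.
-/

section DoubleSums

variable {ι : Type*} [DecidableEq ι]

theorem Finset.sum_sum_le_add_of_le_off_pair (T : Finset ι) {f g : ι → ι → ℕ} {B : ℕ} (u v : ι)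
    (hg : ∀ x y, g x y ≤ B) (hfg : ∀ x y, ¬(x = u ∧ y = v) → ¬(x = v ∧ y = u) → g x y ≤ f x y) :
    ∑ x ∈ T, ∑ y ∈ T, g x y ≤ ∑ x ∈ T, ∑ y ∈ T, f x y + 2 * B := by
  have hpt : ∀ p : ι × ι, g p.1 p.2 ≤
      f p.1 p.2 + (if (u, v) = p then B else 0) + (if (v, u) = p then B else 0) := by
    rintro ⟨x, y⟩
    simp only [Prod.mk.injEq]
    split_ifs <;> grind
  simp only [← Finset.sum_product']
  calc ∑ p ∈ T ×ˢ T, g p.1 p.2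
      ≤ ∑ p ∈ T ×ˢ T, (f p.1 p.2 + (if (u, v) = p then B else 0) + (if (v, u) = p then B else 0)) :=
        Finset.sum_le_sum fun p _ => hpt p
    _ ≤ ∑ p ∈ T ×ˢ T, f p.1 p.2 + 2 * B := by
        rw [Finset.sum_add_distrib, Finset.sum_add_distrib, Finset.sum_ite_eq, Finset.sum_ite_eq]
        split_ifs <;> omega

theorem Finset.sum_sum_add_diag_eq {M : Type*} [AddCommMonoid M] (T : Finset ι) (f : ι → ι → M)
    {r : ι} (hr : r ∈ T) :
    ∑ x ∈ T, ∑ y ∈ T, f x y + f r r =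
      ∑ y ∈ T, (f r y + f y r) + ∑ x ∈ T.erase r, ∑ y ∈ T.erase r, f x y := by
  have hrow : ∀ x, ∑ y ∈ T, f x y = f x r + ∑ y ∈ T.erase r, f x y := fun x =>
    (Finset.add_sum_erase T _ hr).symm
  rw [← Finset.add_sum_erase T _ hr, Finset.sum_congr rfl fun x _ => hrow x,
    Finset.sum_add_distrib, Finset.sum_add_distrib, ← Finset.add_sum_erase T (fun x => f x r) hr]
  abel

end DoubleSums

namespace ListUpdate

variable {α : Type}

lemma adjSwap_eq_self_or (M : List α) (i : ℕ) :
    adjSwap M i = M ∨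
      ∃ A u v B, M = A ++ u :: v :: B ∧ adjSwap M i = A ++ v :: u :: B := by
  have hM := List.take_append_drop i M
  unfold adjSwap
  rcases hd : M.drop i with _ | ⟨u, _ | ⟨v, B⟩⟩
  · left; simpa [hd] using hM
  · left; simpa [hd] using hM
  · right; exact ⟨_, u, v, B, by rw [← hd, hM], rfl⟩

lemma adjSwap_perm (M : List α) (i : ℕ) : (adjSwap M i).Perm M := by
  rcases adjSwap_eq_self_or M i with h | ⟨A, u, v, B, hM, hswap⟩
  · rw [h]
  · rw [hswap, hM]
    exact List.Perm.append_left _ (List.Perm.swap u v B)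

lemma doPaid_perm (M : List α) (ps : List ℕ) : (doPaid M ps).Perm M := by
  induction ps generalizing M with
  | nil => rfl
  | cons p ps ih => exact (ih (adjSwap M p)).trans (adjSwap_perm M p)

variable [DecidableEq α]

def precedes (M : List α) (y x : α) : Bool := decide (M.idxOf y < M.idxOf x)

@[simp] lemma precedes_self (M : List α) (x : α) : precedes M x x = false := by
  simp [precedes]

@[simp] lemma precedes_cons_self (M : List α) (r y : α) : precedes (r :: M) y r = false := by
  simp [precedes]

lemma precedes_cons_of_ne (M : List α) {c x y : α} (hx : x ≠ c) (hy : y ≠ c) :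
    precedes (c :: M) y x = precedes M y x := by
  simp [precedes, List.idxOf_cons_ne _ hx.symm, List.idxOf_cons_ne _ hy.symm]

lemma precedes_comm {M : List α} {x y : α} (hx : x ∈ M) (hxy : x ≠ y) :
    precedes M x y = !precedes M y x := by
  have hne : M.idxOf x ≠ M.idxOf y := fun h => hxy ((List.idxOf_inj hx).1 h)
  unfold precedes
  rcases Nat.lt_or_gt_of_ne hne with h | h <;> simp [h, h.not_gt]

lemma precedes_append (A l : List α) (x y : α) :
    precedes (A ++ l) y x =
      if x ∈ A then precedes A y x else (decide (y ∈ A) || precedes l y x) := by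
  unfold precedes
  split_ifs with hx <;> by_cases hy : y ∈ A <;>
    simp [hx, hy, List.idxOf_append] <;> grind

lemma precedes_append_congr {A l l' : List α} {x y : α}
    (h : x ∉ A → y ∉ A → precedes l y x = precedes l' y x) :
    precedes (A ++ l) y x = precedes (A ++ l') y x := by
  rw [precedes_append, precedes_append]
  split_ifs with hx
  · rfl
  · by_cases hy : y ∈ A <;> simp [hy, h hx]

lemma precedes_cons_cons_comm (B : List α) {u v x y : α} (h₁ : ¬(x = u ∧ y = v))
    (h₂ : ¬(x = v ∧ y = u)) :
    precedes (v :: u :: B) y x = precedes (u :: v :: B) y x := by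
  unfold precedes
  simp only [List.idxOf_cons, cond_eq_ite, beq_iff_eq]
  split_ifs <;> simp_all

lemma exists_freeMove_eq {M : List α} {r : α} (hr : r ∈ M) (j : ℕ) :
    ∃ P₁ P₂ Q, r ∉ P₁ ∧ M = P₁ ++ (P₂ ++ r :: Q) ∧ freeMove M r j = P₁ ++ r :: (P₂ ++ Q) := by
  obtain ⟨P, Q, hrP, rfl, herase⟩ := List.exists_erase_eq hr
  have hidx : (P ++ r :: Q).idxOf r = P.length := by simp [List.idxOf_append, hrP]
  set k := min j P.length
  have hk : (P.take k).length = k := List.length_take_of_le (min_le_right _ _)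
  refine ⟨P.take k, P.drop k, Q, fun h => hrP (List.mem_of_mem_take h),
    by rw [← List.append_assoc, List.take_append_drop], ?_⟩
  have hins := List.modifyTailIdx_add (List.cons r) 0 (P.take k) (P.drop k ++ Q)
  rw [freeMove, herase, hidx]
  conv_lhs => rw [← List.take_append_drop k P, List.append_assoc]
  simpa [List.insertIdx, hk] using hins

lemma freeMove_zero (M : List α) (r : α) : freeMove M r 0 = r :: M.erase r := by
  simp [freeMove]

lemma freeMove_perm {M : List α} {r : α} (hr : r ∈ M) (j : ℕ) : (freeMove M r j).Perm M := by
  obtain ⟨P₁, P₂, Q, -, hM, hmove⟩ := exists_freeMove_eq hr j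
  rw [hmove, hM]
  exact List.Perm.append_left _ List.perm_middle.symm

lemma precedes_freeMove_of_ne {M : List α} {r x y : α} (hr : r ∈ M) (j : ℕ)
    (hx : x ≠ r) (hy : y ≠ r) :
    precedes (freeMove M r j) y x = precedes M y x := by
  obtain ⟨P₁, P₂, Q, -, hM, hmove⟩ := exists_freeMove_eq hr j
  rw [hmove, hM]
  refine precedes_append_congr fun _ _ => ?_
  rw [precedes_cons_of_ne _ hx hy]
  exact precedes_append_congr fun _ _ => (precedes_cons_of_ne _ hx hy).symm

lemma precedes_of_precedes_freeMove {M : List α} {r y : α} (hr : r ∈ M) (j : ℕ)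
    (h : precedes (freeMove M r j) y r) : precedes M y r := by
  obtain ⟨P₁, P₂, Q, hrP, hM, hmove⟩ := exists_freeMove_eq hr j
  rw [hmove, precedes_append, if_neg hrP] at h
  rw [hM, precedes_append, if_neg hrP]
  simp only [precedes_cons_self, Bool.or_false, decide_eq_true_eq] at h
  simp [h]

lemma stepList_perm {M : List α} {r : α} (hr : r ∈ M) (a : Action α) :
    (stepList M r a).Perm M :=
  (freeMove_perm ((doPaid_perm M a.paid).mem_iff.2 hr) a.target).trans (doPaid_perm M a.paid)

lemma mtfIf_perm (p : Bool) {M : List α} {r : α} (hr : r ∈ M) :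
    (if p then M else r :: M.erase r).Perm M := by
  cases p
  · exact (List.perm_cons_erase hr).symm
  · rfl

lemma precedes_mtfIf_self (p : Bool) (M : List α) (r y : α) :
    precedes (if p then M else r :: M.erase r) y r = (precedes M y r && p) := by
  cases p <;> simp

lemma precedes_mtfIf_of_ne (p : Bool) {M : List α} {r x y : α} (hr : r ∈ M) (hx : x ≠ r)
    (hy : y ≠ r) : precedes (if p then M else r :: M.erase r) y x = precedes M y x := by
  cases p
  · rw [if_neg Bool.false_ne_true, ← freeMove_zero, precedes_freeMove_of_ne hr 0 hx hy]
  · rfl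

/-- The weight of an ordered pair `(x, y)`: `o`, `e`, `s` record whether `y` precedes `x` in the
lists of MTFO, MTFE and OPT, and `bx`, `by'` are MTFO's bits of `x` and `y`. -/
def pairWeight (o e s bx by' : Bool) : ℕ :=
  if o = e then (if s = o then 0 else 4)
  else if o then 1 + (if bx then 0 else 1) + (if by' then 1 else 0)
  else 1 + (if bx then 1 else 0) + (if by' then 0 else 1)

lemma pairWeight_le_four (o e s bx by' : Bool) : pairWeight o e s bx by' ≤ 4 := by
  revert o e s bx by'; decide

lemma pairWeight_self (o bx by' : Bool) : pairWeight o o o bx by' = 0 := by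
  simp [pairWeight]

/-- A request to `r`, seen on the pair `{r, y}`: `o`, `e`, `s` record whether `y` precedes `r`
for MTFO, MTFE and OPT, MTFO moves `r` to the front iff its bit `br` is set and MTFE iff it is not,
and OPT's free exchange can only move `r` forward (`s' → s`). -/
lemma pairWeight_access (o e s s' br by' : Bool) (hs : s' = true → s = true) :
    2 * o.toNat + 2 * e.toNat
        + (pairWeight (o && !br) (e && br) s' (!br) by'
          + pairWeight (!(o && !br)) (!(e && br)) (!s') by' (!br))
      ≤ 8 * s.toNat + (pairWeight o e s br by' + pairWeight (!o) (!e) (!s) by' br) := by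
  revert o e s s' br by'; decide

def pairPotential (LO LE LS : List α) (b : α → Bool) (x y : α) : ℕ :=
  pairWeight (precedes LO y x) (precedes LE y x) (precedes LS y x) (b x) (b y)

def potential (T : Finset α) (LO LE LS : List α) (b : α → Bool) : ℕ :=
  ∑ x ∈ T, ∑ y ∈ T, pairPotential LO LE LS b x y

lemma potential_self (T : Finset α) (M : List α) (b : α → Bool) : potential T M M M b = 0 := by
  simp [potential, pairPotential, pairWeight_self]

lemma potential_adjSwap_le (T : Finset α) (LO LE LS : List α) (b : α → Bool) (i : ℕ) :
    potential T LO LE (adjSwap LS i) b ≤ potential T LO LE LS b + 8 := by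
  rcases adjSwap_eq_self_or LS i with h | ⟨A, u, v, B, hM, hswap⟩
  · rw [h]; exact Nat.le_add_right _ _
  · unfold potential
    refine Finset.sum_sum_le_add_of_le_off_pair (B := 4) T u v (fun x y => pairWeight_le_four ..)
      fun x y h₁ h₂ => le_of_eq ?_
    rw [pairPotential, pairPotential, hswap, hM,
      precedes_append_congr fun _ _ => precedes_cons_cons_comm B h₁ h₂]

lemma potential_doPaid_le (T : Finset α) (LO LE LS : List α) (b : α → Bool) (ps : List ℕ) :
    potential T LO LE (doPaid LS ps) b ≤ potential T LO LE LS b + 8 * ps.length := by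
  induction ps generalizing LS with
  | nil => rfl
  | cons p ps ih =>
    have := potential_adjSwap_le T LO LE LS b p
    have := ih (adjSwap LS p)
    simp only [doPaid, List.foldl_cons, List.length_cons] at *
    omega

lemma idxOf_eq_sum_precedes {M : List α} (hM : M.Nodup) (r : α) :
    M.idxOf r = ∑ y ∈ M.toFinset, (precedes M y r).toNat := by
  induction M with
  | nil => simp
  | cons c M ih =>
    obtain ⟨hcM, hM⟩ := List.nodup_cons.1 hM
    by_cases hcr : c = r
    · subst hcr
      simp
    · have hcM' : c ∉ M.toFinset := by simpa using hcM
      rw [List.idxOf_cons_ne _ hcr, List.toFinset_cons, Finset.sum_insert hcM', ih hM]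
      have hrest : ∀ y ∈ M.toFinset, precedes (c :: M) y r = precedes M y r := fun y hy =>
        precedes_cons_of_ne M (Ne.symm hcr) (fun h => hcM (h ▸ List.mem_toFinset.1 hy))
      rw [Finset.sum_congr rfl fun y hy => congrArg Bool.toNat (hrest y hy)]
      simp [precedes, List.idxOf_cons_ne _ hcr, add_comm]

section Access

variable {L LO LE LS : List α} {r : α}

lemma pairPotential_access_le (hO : LO.Perm L) (hE : LE.Perm L) (hS : LS.Perm L)
    (hr : r ∈ L) (b : α → Bool) (j : ℕ) (y : α) :
    2 * (precedes LO y r).toNat + 2 * (precedes LE y r).toNat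
        + (pairPotential (if !b r then LO else r :: LO.erase r)
            (if b r then LE else r :: LE.erase r) (freeMove LS r j)
            (Function.update b r (!b r)) r y
          + pairPotential (if !b r then LO else r :: LO.erase r)
            (if b r then LE else r :: LE.erase r) (freeMove LS r j)
            (Function.update b r (!b r)) y r)
      ≤ 8 * (precedes LS y r).toNat
        + (pairPotential LO LE LS b r y + pairPotential LO LE LS b y r) := by
  rcases eq_or_ne y r with rfl | hyr
  · simp [pairPotential, pairWeight_self]
  have hrO := hO.mem_iff.2 hr
  have hrE := hE.mem_iff.2 hr
  have hrS := hS.mem_iff.2 hr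
  simp only [pairPotential]
  rw [precedes_comm ((mtfIf_perm _ hrO).mem_iff.2 hrO) hyr.symm,
    precedes_comm ((mtfIf_perm _ hrE).mem_iff.2 hrE) hyr.symm,
    precedes_comm ((freeMove_perm hrS j).mem_iff.2 hrS) hyr.symm,
    precedes_comm hrO hyr.symm, precedes_comm hrE hyr.symm, precedes_comm hrS hyr.symm,
    precedes_mtfIf_self, precedes_mtfIf_self, Function.update_self, Function.update_of_ne hyr]
  exact pairWeight_access _ _ _ _ _ _ (precedes_of_precedes_freeMove hrS j)

lemma potential_access_le (hL : L.Nodup) (hO : LO.Perm L) (hE : LE.Perm L) (hS : LS.Perm L)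
    (hr : r ∈ L) (b : α → Bool) (j : ℕ) :
    2 * LO.idxOf r + 2 * LE.idxOf r
        + potential L.toFinset (if !b r then LO else r :: LO.erase r)
          (if b r then LE else r :: LE.erase r) (freeMove LS r j) (Function.update b r (!b r))
      ≤ 8 * LS.idxOf r + potential L.toFinset LO LE LS b := by
  have hrT : r ∈ L.toFinset := List.mem_toFinset.2 hr
  have hidx : ∀ M : List α, M.Perm L → M.idxOf r = ∑ y ∈ L.toFinset, (precedes M y r).toNat :=
    fun M hM => by rw [idxOf_eq_sum_precedes (hM.nodup_iff.2 hL), List.toFinset_eq_of_perm _ _ hM]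
  have hdiag : ∀ (LO LE LS : List α) b, pairPotential LO LE LS b r r = 0 := by
    simp [pairPotential, pairWeight_self]
  have hrest : ∑ x ∈ L.toFinset.erase r, ∑ y ∈ L.toFinset.erase r,
        pairPotential (if !b r then LO else r :: LO.erase r) (if b r then LE else r :: LE.erase r)
          (freeMove LS r j) (Function.update b r (!b r)) x y
      = ∑ x ∈ L.toFinset.erase r, ∑ y ∈ L.toFinset.erase r, pairPotential LO LE LS b x y := by
    refine Finset.sum_congr rfl fun x hx => Finset.sum_congr rfl fun y hy => ?_
    have hxr := Finset.ne_of_mem_erase hx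
    have hyr := Finset.ne_of_mem_erase hy
    rw [pairPotential, pairPotential, precedes_mtfIf_of_ne _ (hO.mem_iff.2 hr) hxr hyr,
      precedes_mtfIf_of_ne _ (hE.mem_iff.2 hr) hxr hyr,
      precedes_freeMove_of_ne (hS.mem_iff.2 hr) j hxr hyr,
      Function.update_of_ne hxr, Function.update_of_ne hyr]
  have hnew := Finset.sum_sum_add_diag_eq L.toFinset
    (pairPotential (if !b r then LO else r :: LO.erase r) (if b r then LE else r :: LE.erase r)
      (freeMove LS r j) (Function.update b r (!b r))) hrT
  have hold := Finset.sum_sum_add_diag_eq L.toFinset (pairPotential LO LE LS b) hrT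
  have hpairs := Finset.sum_le_sum fun y (_ : y ∈ L.toFinset) =>
    pairPotential_access_le hO hE hS hr b j y
  simp only [Finset.sum_add_distrib, ← Finset.mul_sum] at hpairs
  rw [hdiag, add_zero, Finset.sum_add_distrib] at hnew hold
  unfold potential
  rw [hidx LO hO, hidx LE hE, hidx LS hS]
  omega

lemma amortized_cost_le (c : ℕ) (hL : L.Nodup) (hO : LO.Perm L) (hE : LE.Perm L)
    (hS : LS.Perm L) (hr : r ∈ L) (b : α → Bool) (a : Action α) :
    2 * (LO.idxOf r + c) + 2 * (LE.idxOf r + c)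
        + potential L.toFinset (if !b r then LO else r :: LO.erase r)
          (if b r then LE else r :: LE.erase r) (stepList LS r a) (Function.update b r (!b r))
      ≤ 8 * stepCost c LS r a + potential L.toFinset LO LE LS b := by
  have hpaid := potential_doPaid_le L.toFinset LO LE LS b a.paid
  have haccess :=
    potential_access_le hL hO hE ((doPaid_perm LS a.paid).trans hS) hr b a.target
  rw [stepCost, stepList]
  omega

end Access

lemma two_mul_mtf2Cost_add_le {L : List α} (c : ℕ) (hL : L.Nodup) (σ : List α)
    (hσ : ∀ r ∈ σ, r ∈ L) (as : List (Action α)) (has : as.length = σ.length) (bO bE : α → Bool)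
    (hbits : ∀ z, bE z = !bO z) {LO LE LS : List α} (hO : LO.Perm L) (hE : LE.Perm L)
    (hS : LS.Perm L) :
    2 * mtf2Cost c bO LO σ + 2 * mtf2Cost c bE LE σ
      ≤ 8 * serveCost c LS σ as + potential L.toFinset LO LE LS bO := by
  induction σ generalizing as bO bE LO LE LS with
  | nil => simp [mtf2Cost]
  | cons r σ ih =>
    obtain _ | ⟨a, as⟩ := as
    · simp at has
    have hr := hσ r List.mem_cons_self
    have hbits' : ∀ z, Function.update bE r (!bE r) z = !Function.update bO r (!bO r) z := by
      intro z
      rcases eq_or_ne z r with rfl | hz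
      · simp [hbits]
      · simp [Function.update_of_ne hz, hbits]
    have hrest := ih (fun x hx => hσ x (List.mem_cons_of_mem r hx)) as
      (by simpa using has) _ _ hbits' ((mtfIf_perm (!bO r) (hO.mem_iff.2 hr)).trans hO)
      ((mtfIf_perm (!bE r) (hE.mem_iff.2 hr)).trans hE)
      ((stepList_perm (hS.mem_iff.2 hr) a).trans hS)
    have hstep := amortized_cost_le c hL hO hE hS hr bO a
    rw [hbits r, Bool.not_not] at hrest
    simp only [mtf2Cost, serveCost, hbits r, Bool.not_not]
    omega

lemma mtfoCost_add_mtfeCost_le {L : List α} (c : ℕ) (hL : L.Nodup) (σ : List α)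
    (hσ : ∀ r ∈ σ, r ∈ L) (as : List (Action α)) (has : as.length = σ.length) :
    mtfoCost c L σ + mtfeCost c L σ ≤ 4 * serveCost c L σ as := by
  have h := two_mul_mtf2Cost_add_le c hL σ hσ as has (fun _ => true) (fun _ => false)
    (fun _ => rfl) (List.Perm.refl L) (List.Perm.refl L) (List.Perm.refl L)
  rw [potential_self, add_zero] at h
  unfold mtfoCost mtfeCost
  omega

end ListUpdate

open ListUpdate

/-- For every initial list and every request sequence, under the full cost model,
`min(MTFO(σ), MTFE(σ)) ≤ 2·OPT(σ)`. -/
theorem min_mtfo_mtfe_le_two_opt {α : Type} [DecidableEq α]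
    (L : List α) (hL : L.Nodup) (σ : List α) (hσ : ∀ r ∈ σ, r ∈ L) :
    min (mtfoCost 1 L σ) (mtfeCost 1 L σ) ≤ 2 * optCost 1 L σ := by
  obtain ⟨as, has, hopt⟩ : optCost 1 L σ ∈
      {n | ∃ as : List (Action α), as.length = σ.length ∧ serveCost 1 L σ as = n} :=
    Nat.sInf_mem ⟨_, σ.map fun _ => ⟨[], 0⟩, by simp, rfl⟩
  have h := mtfoCost_add_mtfeCost_le 1 hL σ hσ as has
  omega
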